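/- Let Λ = diag(λ₁, λ₂, λ₃) with ∑ᵢ |λᵢ| ≤ 1 and t ∈ ℝ³, and suppose the singular values of Λ are at most 1. Then the sum of the two smallest eigenvalues of M = (ΛΛᵀ + 5ttᵀ)/2 is at most (1 − n̂ᵀΛΛᵀn̂ − ∑_{i≠j}|λᵢλⱼ|)/2 for any unit vector n̂ parallel to t, and hence is at most 1/2. -/

import Mathlib

open Matrix

/-- `μ` lists the eigenvalues of the real symmetric 3×3 matrix `M` in nonincreasing
order, via an orthogonal diagonalization `M = Oᵀ (diag μ) O`. -/
def EigOrdered (M : Matrix (Fin 3) (Fin 3) ℝ) (μ : Fin 3 → ℝ) : Prop :=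
  (∃ O : Matrix (Fin 3) (Fin 3) ℝ, Oᵀ * O = 1 ∧ M = Oᵀ * Matrix.diagonal μ * O) ∧
  μ 1 ≤ μ 0 ∧ μ 2 ≤ μ 1

/-!
The largest eigenvalue `μ 0` dominates the Rayleigh quotient `nᵀ M n` of every unit vector, so
`μ 1 + μ 2 = tr M - μ 0 ≤ tr M - nᵀ M n`. For `n` parallel to `t` the rank-one part `5 t tᵀ`
contributes `5 |t|²` to both the trace and the Rayleigh quotient, and what remains is
`(∑ λᵢ² - nᵀ Λ Λᵀ n) / 2`; finally `∑ λᵢ² + ∑_{i≠j} |λᵢ λⱼ| = (∑ |λᵢ|)² ≤ 1`.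
-/

section General

variable {ι : Type*} [Fintype ι]

theorem dotProduct_mulVec_vecMulVec_smul_self (c : ℝ) {n : ι → ℝ} (hn : n ⬝ᵥ n = 1) :
    n ⬝ᵥ vecMulVec (c • n) (c • n) *ᵥ n = (vecMulVec (c • n) (c • n)).trace := by
  rw [vecMulVec_mulVec, trace_vecMulVec]
  simp [hn, dotProduct_comm n]

theorem dotProduct_mulVec_mul_transpose_self_nonneg {κ : Type*} [Fintype κ]
    (A : Matrix ι κ ℝ) (n : ι → ℝ) : 0 ≤ n ⬝ᵥ (A * Aᵀ) *ᵥ n := by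
  simpa using (posSemidef_self_mul_conjTranspose A).dotProduct_mulVec_nonneg n

variable [DecidableEq ι]

theorem trace_transpose_mul_mul_of_orthogonal (O D : Matrix ι ι ℝ) (hO : Oᵀ * O = 1) :
    (Oᵀ * D * O).trace = D.trace := by
  rw [trace_mul_cycle, mul_eq_one_comm.mp hO, Matrix.one_mul]

theorem dotProduct_mulVec_orthogonal_conj_diagonal_le (O : Matrix ι ι ℝ)
    (hO : Oᵀ * O = 1) {μ : ι → ℝ} {m : ℝ} (hμ : ∀ i, μ i ≤ m) (n : ι → ℝ) :
    n ⬝ᵥ (Oᵀ * diagonal μ * O) *ᵥ n ≤ m * (n ⬝ᵥ n) := by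
  have hv : (O *ᵥ n) ⬝ᵥ (O *ᵥ n) = n ⬝ᵥ n := by
    rw [dotProduct_mulVec, ← vecMul_transpose, vecMul_vecMul, hO, vecMul_one]
  calc n ⬝ᵥ (Oᵀ * diagonal μ * O) *ᵥ n = ∑ i, μ i * ((O *ᵥ n) i * (O *ᵥ n) i) := by
        rw [Matrix.mul_assoc, ← mulVec_mulVec, dotProduct_mulVec, vecMul_transpose,
          ← mulVec_mulVec]
        simp only [dotProduct, mulVec_diagonal]
        exact Finset.sum_congr rfl fun i _ => by ring
    _ ≤ ∑ i, m * ((O *ᵥ n) i * (O *ᵥ n) i) :=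
        Finset.sum_le_sum fun i _ => mul_le_mul_of_nonneg_right (hμ i) (mul_self_nonneg _)
    _ = m * (n ⬝ᵥ n) := by rw [← Finset.mul_sum, ← hv]; rfl

theorem sum_sq_add_sum_offDiag_abs_mul (l : ι → ℝ) :
    ∑ i, l i ^ 2 + ∑ i, ∑ j, (if i ≠ j then |l i * l j| else 0) = (∑ i, |l i|) ^ 2 := by
  have hsplit : ∀ i j, |l i| * |l j| =
      (if i = j then l i ^ 2 else 0) + (if i ≠ j then |l i * l j| else 0) := by
    intro i j
    by_cases h : i = j
    · subst h; simp [← abs_mul_abs_self, sq]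
    · simp [h, abs_mul]
  simp only [sq (∑ i, |l i|), Finset.sum_mul_sum, hsplit, Finset.sum_add_distrib,
    Finset.sum_ite_eq, Finset.mem_univ, if_true]

theorem sum_offDiag_abs_mul_nonneg (l : ι → ℝ) :
    0 ≤ ∑ i, ∑ j, (if i ≠ j then |l i * l j| else 0) :=
  Finset.sum_nonneg fun i _ => Finset.sum_nonneg fun j _ => by split_ifs <;> positivity

theorem exists_unit_smul_eq [Nonempty ι] (t : ι → ℝ) :
    ∃ n : ι → ℝ, n ⬝ᵥ n = 1 ∧ ∃ c : ℝ, t = c • n := by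
  by_cases ht : t = 0
  · obtain ⟨i⟩ := ‹Nonempty ι›
    exact ⟨Pi.single i 1, by simp, 0, by simp [ht]⟩
  · have hpos : 0 < t ⬝ᵥ t :=
      (Fintype.sum_nonneg fun i => mul_self_nonneg (t i)).lt_of_ne
        (Ne.symm (dotProduct_self_eq_zero.not.mpr ht))
    refine ⟨(√(t ⬝ᵥ t))⁻¹ • t, ?_, √(t ⬝ᵥ t), ?_⟩
    · rw [smul_dotProduct, dotProduct_smul, smul_eq_mul, smul_eq_mul, ← mul_assoc,
        ← mul_inv, Real.mul_self_sqrt hpos.le, inv_mul_cancel₀ hpos.ne']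
    · rw [smul_smul, mul_inv_cancel₀ (Real.sqrt_pos.mpr hpos).ne', one_smul]

end General

theorem EigOrdered.add_le_trace_sub {M : Matrix (Fin 3) (Fin 3) ℝ} {μ : Fin 3 → ℝ}
    (h : EigOrdered M μ) {n : Fin 3 → ℝ} (hn : n ⬝ᵥ n = 1) :
    μ 1 + μ 2 ≤ M.trace - n ⬝ᵥ M *ᵥ n := by
  obtain ⟨⟨O, hO, rfl⟩, h10, h21⟩ := h
  have hμ : ∀ i, μ i ≤ μ 0 := by
    intro i
    fin_cases i
    exacts [le_rfl, h10, h21.trans h10]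
  have hray := dotProduct_mulVec_orthogonal_conj_diagonal_le O hO hμ n
  rw [hn, mul_one] at hray
  rw [trace_transpose_mul_mul_of_orthogonal O _ hO, trace_diagonal, Fin.sum_univ_three]
  linarith

theorem stmt10_general (l : Fin 3 → ℝ) (t : Fin 3 → ℝ)
    (Λ : Matrix (Fin 3) (Fin 3) ℝ) (hΛ : Λ = Matrix.diagonal l)
    (hsum : ∑ i, |l i| ≤ 1)
    (μ : Fin 3 → ℝ)
    (hμ : EigOrdered ((1/2 : ℝ) • (Λ * Λᵀ + (5 : ℝ) • vecMulVec t t)) μ) :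
    (∀ n : Fin 3 → ℝ, n ⬝ᵥ n = 1 → (∃ c : ℝ, t = c • n) →
      μ 1 + μ 2 ≤
        (1 - n ⬝ᵥ (Λ * Λᵀ).mulVec n - ∑ i, ∑ j, if i ≠ j then |l i * l j| else 0) / 2)
    ∧ μ 1 + μ 2 ≤ 1/2 := by
  have htrace : (Λ * Λᵀ).trace = ∑ i, l i ^ 2 := by
    simp [hΛ, diagonal_mul_diagonal, trace_diagonal, sq]
  have hEB : ∑ i, l i ^ 2 + ∑ i, ∑ j, (if i ≠ j then |l i * l j| else 0) ≤ 1 := by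
    rw [sum_sq_add_sum_offDiag_abs_mul]
    nlinarith [Finset.sum_nonneg fun i (_ : i ∈ Finset.univ) => abs_nonneg (l i)]
  have part1 : ∀ n : Fin 3 → ℝ, n ⬝ᵥ n = 1 → (∃ c : ℝ, t = c • n) →
      μ 1 + μ 2 ≤
        (1 - n ⬝ᵥ (Λ * Λᵀ).mulVec n - ∑ i, ∑ j, if i ≠ j then |l i * l j| else 0) / 2 := by
    rintro n hn ⟨c, rfl⟩
    have hbound := hμ.add_le_trace_sub hn
    simp only [trace_smul, trace_add, smul_mulVec, add_mulVec, dotProduct_smul,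
      dotProduct_add, smul_eq_mul, dotProduct_mulVec_vecMulVec_smul_self c hn, htrace] at hbound
    linarith
  refine ⟨part1, ?_⟩
  obtain ⟨n, hn, hpar⟩ := exists_unit_smul_eq t
  linarith [part1 n hn hpar, dotProduct_mulVec_mul_transpose_self_nonneg Λ n,
    sum_offDiag_abs_mul_nonneg l]

/-- For a diagonal `Λ = diag(λ)` with `∑ᵢ|λᵢ| ≤ 1` (entanglement breaking) and
singular values at most 1, the sum of the two smallest eigenvalues of
`M = (ΛΛᵀ + 5ttᵀ)/2` is bounded by `(1 − n̂ᵀΛΛᵀn̂ − ∑_{i≠j}|λᵢλⱼ|)/2` for any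
unit `n̂` parallel to `t`, hence by `1/2`. -/
theorem stmt10 (l : Fin 3 → ℝ) (t : Fin 3 → ℝ)
    (Λ : Matrix (Fin 3) (Fin 3) ℝ) (hΛ : Λ = Matrix.diagonal l)
    (hsum : ∑ i, |l i| ≤ 1) (hsing : ∀ i, |l i| ≤ 1)
    (μ : Fin 3 → ℝ)
    (hμ : EigOrdered ((1/2 : ℝ) • (Λ * Λᵀ + (5 : ℝ) • vecMulVec t t)) μ) :
    (∀ n : Fin 3 → ℝ, n ⬝ᵥ n = 1 → (∃ c : ℝ, t = c • n) →
      μ 1 + μ 2 ≤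
        (1 - n ⬝ᵥ (Λ * Λᵀ).mulVec n - ∑ i, ∑ j, if i ≠ j then |l i * l j| else 0) / 2)
    ∧ μ 1 + μ 2 ≤ 1/2 :=
  stmt10_general l t Λ hΛ hsum μ hμ
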